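/- There is a constant C > 0 such that |B(u,v)| ≤ C ‖u‖_{1/4} ‖v‖_{1/4} for all u, v in 𝓗 = 𝓗_{1/4}, i.e., the GOY bilinear operator maps 𝓗 × 𝓗 boundedly into H. -/

import Mathlib

open scoped ComplexConjugate

/-- `k_n = k_0 μ^n`. -/
noncomputable def kseq (k0 μ : ℝ) (n : ℕ) : ℝ := k0 * μ ^ n

/-- The GOY shell model bilinear operator (componentwise, with the convention
`u 0 = 0` playing the role of `u_0 = u_{-1} = 0`; truncated subtraction on `ℕ`
sends the out-of-range indices to `0`). -/
noncomputable def goyB (k0 μ a b : ℝ) (u v : ℕ → ℂ) (n : ℕ) : ℂ :=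
  -Complex.I *
    ( ((a * kseq k0 μ (n+1) : ℝ) : ℂ) * conj (u (n+1)) * conj (v (n+2))
    + ((b * kseq k0 μ n : ℝ) : ℂ) * conj (u (n-1)) * conj (v (n+1))
    - ((a * kseq k0 μ (n-1) : ℝ) : ℂ) * conj (u (n-1)) * conj (v (n-2))
    - ((b * kseq k0 μ (n-1) : ℝ) : ℂ) * conj (u (n-2)) * conj (v (n-1)) )

/-- Real pairing `⟨x,y⟩ = Re Σ_{n≥1} x_n y_n^*`. -/
noncomputable def pairH (x y : ℕ → ℂ) : ℝ := ∑' n : ℕ, (x (n+1) * conj (y (n+1))).re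

/-- `|u|² = Σ_{n≥1} |u_n|²`. -/
noncomputable def hSq (u : ℕ → ℂ) : ℝ := ∑' n : ℕ, ‖u (n+1)‖^2

/-- `‖u‖² = Σ_{n≥1} k_n² |u_n|²`. -/
noncomputable def vSq (k0 μ : ℝ) (u : ℕ → ℂ) : ℝ :=
  ∑' n : ℕ, (kseq k0 μ (n+1))^2 * ‖u (n+1)‖^2

/-- `u ∈ H`. -/
def memH (u : ℕ → ℂ) : Prop := Summable (fun n : ℕ => ‖u (n+1)‖^2)

/-- `u ∈ V`. -/
def memV (k0 μ : ℝ) (u : ℕ → ℂ) : Prop :=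
  Summable (fun n : ℕ => (kseq k0 μ (n+1))^2 * ‖u (n+1)‖^2)

/-- `‖u‖_{1/4}² = Σ_{n≥1} k_n |u_n|²`. -/
noncomputable def qSq (k0 μ : ℝ) (u : ℕ → ℂ) : ℝ :=
  ∑' n : ℕ, (kseq k0 μ (n+1)) * ‖u (n+1)‖^2

/-- `u ∈ 𝓗_{1/4}`. -/
def memQ (k0 μ : ℝ) (u : ℕ → ℂ) : Prop :=
  Summable (fun n : ℕ => (kseq k0 μ (n+1)) * ‖u (n+1)‖^2)

-- auxiliary lemmas

lemma kseq_pos {k0 μ : ℝ} (hk0 : 0 < k0) (hμ : 0 < μ) (m : ℕ) : 0 < kseq k0 μ m := by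
  unfold kseq; positivity

lemma kseq_succ (k0 μ : ℝ) (m : ℕ) : kseq k0 μ (m+1) = μ * kseq k0 μ m := by
  unfold kseq; rw [pow_succ]; ring

lemma goy_sup_bound {k0 μ : ℝ} (hk0 : 0 < k0) (hμ : 0 < μ) (u : ℕ → ℂ) (hu0 : u 0 = 0)
    (hu : memQ k0 μ u) (m : ℕ) : kseq k0 μ m * ‖u m‖^2 ≤ qSq k0 μ u := by
  have hnn : ∀ j : ℕ, 0 ≤ kseq k0 μ (j+1) * ‖u (j+1)‖^2 :=
    fun j => mul_nonneg (kseq_pos hk0 hμ _).le (sq_nonneg _)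
  cases m with
  | zero => rw [hu0]; simpa [qSq] using tsum_nonneg hnn
  | succ j => exact Summable.le_tsum hu j (fun i _ => hnn i)

lemma qSq_nonneg {k0 μ : ℝ} (hk0 : 0 < k0) (hμ : 0 < μ) (u : ℕ → ℂ) : 0 ≤ qSq k0 μ u :=
  tsum_nonneg (fun j => mul_nonneg (kseq_pos hk0 hμ _).le (sq_nonneg _))

lemma four_term_norm (A B C D : ℂ) :
    ‖-Complex.I * (A + B - C - D)‖ ≤ ‖A‖ + ‖B‖ + ‖C‖ + ‖D‖ := by
  rw [norm_mul]
  simp only [norm_neg, Complex.norm_I, one_mul]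
  have h1 := norm_sub_le (A + B - C) D
  have h2 := norm_sub_le (A + B) C
  have h3 := norm_add_le A B
  linarith

lemma conj_prod_norm (r : ℝ) (x y : ℂ) :
    ‖((r : ℝ) : ℂ) * conj x * conj y‖ = |r| * (‖x‖ * ‖y‖) := by
  simp [norm_mul, mul_assoc]

lemma sq_sum_four (x t1 t2 t3 t4 : ℝ) (h0 : 0 ≤ x) (h : x ≤ t1 + t2 + t3 + t4) :
    x^2 ≤ 4 * (t1^2 + t2^2 + t3^2 + t4^2) := by
  nlinarith [mul_self_le_mul_self h0 h, sq_nonneg (t1 - t2), sq_nonneg (t1 - t3),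
    sq_nonneg (t1 - t4), sq_nonneg (t2 - t3), sq_nonneg (t2 - t4), sq_nonneg (t3 - t4)]

lemma goy_term1 (μ A s K x y Q : ℝ) (hμ : 1 ≤ μ) (hK : 0 ≤ K) (hA : s^2 ≤ A)
    (hQ : 0 ≤ Q) (h : (μ * K) * y^2 ≤ Q) :
    (s * K * (x * y))^2 ≤ μ * A * (K * x^2 * Q) := by
  have h1 := mul_le_mul_of_nonneg_left h
    (mul_nonneg (mul_nonneg (sq_nonneg s) hK) (sq_nonneg x))
  have hM : 0 ≤ K * x^2 * Q := mul_nonneg (mul_nonneg hK (sq_nonneg x)) hQ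
  nlinarith [sq_nonneg (s * K * (x * y)), mul_nonneg (mul_nonneg (sub_nonneg.mpr hA) hM)
    (le_of_lt (lt_of_lt_of_le zero_lt_one hμ)),
    mul_nonneg (sub_nonneg.mpr hμ) hM, mul_nonneg (sub_nonneg.mpr hμ)
    (sq_nonneg (s * K * (x * y))), mul_nonneg (sub_nonneg.mpr hA) hM]

lemma goy_term2 (μ A s K x y Q : ℝ) (hμ : 1 ≤ μ) (hK : 0 ≤ K) (hA : s^2 ≤ A)
    (hQ : 0 ≤ Q) (h : μ * (μ * K) * y^2 ≤ Q) :
    (s * (μ * K) * (x * y))^2 ≤ μ * A * (K * x^2 * Q) := by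
  have h1 := mul_le_mul_of_nonneg_left h
    (mul_nonneg (mul_nonneg (sq_nonneg s) hK) (sq_nonneg x))
  have hM : 0 ≤ K * x^2 * Q := mul_nonneg (mul_nonneg hK (sq_nonneg x)) hQ
  nlinarith [mul_nonneg (sub_nonneg.mpr hμ) hM, mul_nonneg (sub_nonneg.mpr hA) hM]

lemma goy_term3 (μ A s K x y Q : ℝ) (hμ0 : 0 ≤ μ) (hK : 0 ≤ K) (hA : s^2 ≤ A)
    (hQ : 0 ≤ Q) (h : K * y^2 ≤ Q) :
    (s * (μ * K) * (x * y))^2 ≤ μ * A * ((μ * K) * x^2 * Q) := by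
  have h1 := mul_le_mul_of_nonneg_left h
    (mul_nonneg (mul_nonneg (mul_nonneg (sq_nonneg s) (mul_nonneg hμ0 hμ0)) hK)
      (sq_nonneg x))
  have hM : 0 ≤ μ * μ * (K * x^2 * Q) :=
    mul_nonneg (mul_nonneg hμ0 hμ0) (mul_nonneg (mul_nonneg hK (sq_nonneg x)) hQ)
  nlinarith [mul_nonneg (sub_nonneg.mpr hA) hM]

lemma goy_term4 (μ A s K x y Q : ℝ) (hμ0 : 0 ≤ μ) (hK : 0 ≤ K) (hA : s^2 ≤ A)
    (hQ : 0 ≤ Q) (h : K * x^2 ≤ Q) :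
    (s * (μ * K) * (x * y))^2 ≤ μ * A * ((μ * K) * y^2 * Q) := by
  have h1 := mul_le_mul_of_nonneg_left h
    (mul_nonneg (mul_nonneg (mul_nonneg (sq_nonneg s) (mul_nonneg hμ0 hμ0)) hK)
      (sq_nonneg y))
  have hM : 0 ≤ μ * μ * (K * y^2 * Q) :=
    mul_nonneg (mul_nonneg hμ0 hμ0) (mul_nonneg (mul_nonneg hK (sq_nonneg y)) hQ)
  nlinarith [mul_nonneg (sub_nonneg.mpr hA) hM]

set_option maxHeartbeats 1000000 in
/-- `B : 𝓗_{1/4} × 𝓗_{1/4} → H` is bounded: `|B(u,v)| ≤ C ‖u‖_{1/4} ‖v‖_{1/4}`. -/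
theorem goy_quarter_bound (k0 μ a b : ℝ) (hk0 : 0 < k0) (hμ : 1 < μ) :
    ∃ C > (0:ℝ), ∀ u v : ℕ → ℂ,
      u 0 = 0 → v 0 = 0 → memQ k0 μ u → memQ k0 μ v →
      memH (goyB k0 μ a b u v) ∧
      Real.sqrt (hSq (goyB k0 μ a b u v)) ≤
        C * Real.sqrt (qSq k0 μ u) * Real.sqrt (qSq k0 μ v) := by
  have hμ0 : 0 < μ := lt_trans one_pos hμ
  have hCsq_pos : (0:ℝ) < 16 * μ * (a^2 + b^2 + 1) := by positivity
  refine ⟨Real.sqrt (16 * μ * (a^2 + b^2 + 1)), Real.sqrt_pos.mpr hCsq_pos, ?_⟩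
  intro u v hu0 hv0 hu hv
  have hQu0 : 0 ≤ qSq k0 μ u := qSq_nonneg hk0 hμ0 u
  have hQv0 : 0 ≤ qSq k0 μ v := qSq_nonneg hk0 hμ0 v
  have hsupu : ∀ m, kseq k0 μ m * ‖u m‖^2 ≤ qSq k0 μ u := goy_sup_bound hk0 hμ0 u hu0 hu
  have hsupv : ∀ m, kseq k0 μ m * ‖v m‖^2 ≤ qSq k0 μ v := goy_sup_bound hk0 hμ0 v hv0 hv
  have hKpos : ∀ m, 0 < kseq k0 μ m := kseq_pos hk0 hμ0
  have habs : ∀ (s : ℝ) (m : ℕ), |s * kseq k0 μ m| = |s| * kseq k0 μ m := by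
    intro s m; rw [abs_mul, abs_of_pos (hKpos m)]
  have hAa : |a|^2 ≤ a^2 + b^2 := by rw [sq_abs]; nlinarith [sq_nonneg b]
  have hAb : |b|^2 ≤ a^2 + b^2 := by rw [sq_abs]; nlinarith [sq_nonneg a]
  -- pointwise bound
  have key : ∀ n : ℕ, ‖goyB k0 μ a b u v (n+1)‖^2 ≤
        (4 * (μ * (a^2 + b^2))) * (kseq k0 μ (n+2) * ‖u (n+2)‖^2 * qSq k0 μ v)
      + (8 * (μ * (a^2 + b^2))) * (kseq k0 μ n * ‖u n‖^2 * qSq k0 μ v)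
      + (4 * (μ * (a^2 + b^2))) * (kseq k0 μ n * ‖v n‖^2 * qSq k0 μ u) := by
    intro n
    have hBn : ‖goyB k0 μ a b u v (n+1)‖ ≤
        |a| * kseq k0 μ (n+2) * (‖u (n+2)‖ * ‖v (n+3)‖)
      + |b| * kseq k0 μ (n+1) * (‖u n‖ * ‖v (n+2)‖)
      + |a| * kseq k0 μ n * (‖u n‖ * ‖v (n-1)‖)
      + |b| * kseq k0 μ n * (‖u (n-1)‖ * ‖v n‖) := by
      have h := four_term_norm
        (((a * kseq k0 μ (n+2) : ℝ) : ℂ) * conj (u (n+2)) * conj (v (n+3)))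
        (((b * kseq k0 μ (n+1) : ℝ) : ℂ) * conj (u n) * conj (v (n+2)))
        (((a * kseq k0 μ n : ℝ) : ℂ) * conj (u n) * conj (v (n-1)))
        (((b * kseq k0 μ n : ℝ) : ℂ) * conj (u (n-1)) * conj (v n))
      rw [conj_prod_norm, conj_prod_norm, conj_prod_norm, conj_prod_norm,
        habs a, habs b, habs a, habs b] at h
      have hgoal : goyB k0 μ a b u v (n+1) =
        -Complex.I *
          ( ((a * kseq k0 μ (n+2) : ℝ) : ℂ) * conj (u (n+2)) * conj (v (n+3))
          + ((b * kseq k0 μ (n+1) : ℝ) : ℂ) * conj (u n) * conj (v (n+2))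
          - ((a * kseq k0 μ n : ℝ) : ℂ) * conj (u n) * conj (v (n-1))
          - ((b * kseq k0 μ n : ℝ) : ℂ) * conj (u (n-1)) * conj (v n)) := rfl
      rw [hgoal]
      convert h using 2 <;> ring
    have hsq := sq_sum_four _ _ _ _ _ (norm_nonneg _) hBn
    have e1 : (|a| * kseq k0 μ (n+2) * (‖u (n+2)‖ * ‖v (n+3)‖))^2 ≤
        μ * (a^2 + b^2) * (kseq k0 μ (n+2) * ‖u (n+2)‖^2 * qSq k0 μ v) := by
      have hv3 := hsupv (n+3)
      rw [show (n+3) = (n+2)+1 from rfl, kseq_succ] at hv3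
      exact goy_term1 μ (a^2+b^2) |a| _ _ _ _ hμ.le (hKpos (n+2)).le hAa hQv0 hv3
    have e2 : (|b| * kseq k0 μ (n+1) * (‖u n‖ * ‖v (n+2)‖))^2 ≤
        μ * (a^2 + b^2) * (kseq k0 μ n * ‖u n‖^2 * qSq k0 μ v) := by
      have hv2 := hsupv (n+2)
      rw [show (n+2) = (n+1)+1 from rfl, kseq_succ, kseq_succ] at hv2
      rw [kseq_succ]
      exact goy_term2 μ (a^2+b^2) |b| _ _ _ _ hμ.le (hKpos n).le hAb hQv0 hv2
    have e3 : (|a| * kseq k0 μ n * (‖u n‖ * ‖v (n-1)‖))^2 ≤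
        μ * (a^2 + b^2) * (kseq k0 μ n * ‖u n‖^2 * qSq k0 μ v) := by
      cases n with
      | zero =>
        rw [show (0:ℕ) - 1 = 0 from rfl, hv0]
        simp only [norm_zero, mul_zero]
        have hnn : (0:ℝ) ≤ kseq k0 μ 0 * ‖u 0‖^2 * qSq k0 μ v :=
          mul_nonneg (mul_nonneg (hKpos 0).le (sq_nonneg _)) hQv0
        simpa using mul_nonneg (by positivity : (0:ℝ) ≤ μ * (a^2+b^2)) hnn
      | succ m =>
        rw [show (m+1) - 1 = m from rfl, kseq_succ]
        exact goy_term3 μ (a^2+b^2) |a| _ _ _ _ hμ0.le (hKpos m).le hAa hQv0 (hsupv m)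
    have e4 : (|b| * kseq k0 μ n * (‖u (n-1)‖ * ‖v n‖))^2 ≤
        μ * (a^2 + b^2) * (kseq k0 μ n * ‖v n‖^2 * qSq k0 μ u) := by
      cases n with
      | zero =>
        rw [show (0:ℕ) - 1 = 0 from rfl, hu0]
        simp only [norm_zero, zero_mul]
        have hnn : (0:ℝ) ≤ kseq k0 μ 0 * ‖v 0‖^2 * qSq k0 μ u :=
          mul_nonneg (mul_nonneg (hKpos 0).le (sq_nonneg _)) hQu0
        simpa using mul_nonneg (by positivity : (0:ℝ) ≤ μ * (a^2+b^2)) hnn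
      | succ m =>
        rw [show (m+1) - 1 = m from rfl, kseq_succ]
        exact goy_term4 μ (a^2+b^2) |b| _ _ _ _ hμ0.le (hKpos m).le hAb hQu0 (hsupu m)
    linarith [hsq, e1, e2, e3, e4]
  -- summability
  have hu' : Summable (fun n : ℕ => kseq k0 μ (n+1) * ‖u (n+1)‖^2) := hu
  have hv' : Summable (fun n : ℕ => kseq k0 μ (n+1) * ‖v (n+1)‖^2) := hv
  have su2 : Summable (fun n : ℕ => kseq k0 μ (n+2) * ‖u (n+2)‖^2) :=
    (summable_nat_add_iff 1).mpr hu'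
  have su0 : Summable (fun n : ℕ => kseq k0 μ n * ‖u n‖^2) :=
    (summable_nat_add_iff (f := fun n : ℕ => kseq k0 μ n * ‖u n‖^2) 1).mp hu'
  have sv0 : Summable (fun n : ℕ => kseq k0 μ n * ‖v n‖^2) :=
    (summable_nat_add_iff (f := fun n : ℕ => kseq k0 μ n * ‖v n‖^2) 1).mp hv'
  have sg1 : Summable (fun n : ℕ =>
      (4 * (μ * (a^2 + b^2))) * (kseq k0 μ (n+2) * ‖u (n+2)‖^2 * qSq k0 μ v)) :=
    (su2.mul_right _).mul_left _
  have sg2 : Summable (fun n : ℕ =>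
      (8 * (μ * (a^2 + b^2))) * (kseq k0 μ n * ‖u n‖^2 * qSq k0 μ v)) :=
    (su0.mul_right _).mul_left _
  have sg3 : Summable (fun n : ℕ =>
      (4 * (μ * (a^2 + b^2))) * (kseq k0 μ n * ‖v n‖^2 * qSq k0 μ u)) :=
    (sv0.mul_right _).mul_left _
  have sg : Summable (fun n : ℕ =>
      (4 * (μ * (a^2 + b^2))) * (kseq k0 μ (n+2) * ‖u (n+2)‖^2 * qSq k0 μ v)
    + (8 * (μ * (a^2 + b^2))) * (kseq k0 μ n * ‖u n‖^2 * qSq k0 μ v)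
    + (4 * (μ * (a^2 + b^2))) * (kseq k0 μ n * ‖v n‖^2 * qSq k0 μ u)) :=
    (sg1.add sg2).add sg3
  have hBsum : Summable (fun n : ℕ => ‖goyB k0 μ a b u v (n+1)‖^2) :=
    Summable.of_nonneg_of_le (fun n => sq_nonneg _) key sg
  refine ⟨hBsum, ?_⟩
  -- tsum estimates
  have hS1 : ∑' n : ℕ, kseq k0 μ (n+2) * ‖u (n+2)‖^2 ≤ qSq k0 μ u := by
    have h := Summable.tsum_eq_zero_add hu'
    have h0 : (0:ℝ) ≤ kseq k0 μ 1 * ‖u 1‖^2 :=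
      mul_nonneg (hKpos 1).le (sq_nonneg _)
    unfold qSq
    rw [h]; exact le_add_of_nonneg_left h0
  have hS2 : ∑' n : ℕ, kseq k0 μ n * ‖u n‖^2 = qSq k0 μ u := by
    have h := Summable.tsum_eq_zero_add su0
    unfold qSq
    rw [h, hu0]; simp
  have hS3 : ∑' n : ℕ, kseq k0 μ n * ‖v n‖^2 = qSq k0 μ v := by
    have h := Summable.tsum_eq_zero_add sv0
    unfold qSq
    rw [h, hv0]; simp
  have htsum : hSq (goyB k0 μ a b u v) ≤
      (16 * μ * (a^2 + b^2 + 1)) * (qSq k0 μ u * qSq k0 μ v) := by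
    have h1 : hSq (goyB k0 μ a b u v) ≤
        (4 * (μ * (a^2 + b^2))) * ((∑' n : ℕ, kseq k0 μ (n+2) * ‖u (n+2)‖^2) * qSq k0 μ v)
      + (8 * (μ * (a^2 + b^2))) * ((∑' n : ℕ, kseq k0 μ n * ‖u n‖^2) * qSq k0 μ v)
      + (4 * (μ * (a^2 + b^2))) * ((∑' n : ℕ, kseq k0 μ n * ‖v n‖^2) * qSq k0 μ u) := by
      have h := Summable.tsum_le_tsum key hBsum sg
      rw [Summable.tsum_add (sg1.add sg2) sg3, Summable.tsum_add sg1 sg2,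
        tsum_mul_left, tsum_mul_left, tsum_mul_left,
        tsum_mul_right, tsum_mul_right, tsum_mul_right] at h
      exact h
    rw [hS2, hS3] at h1
    have h3 : (4 * (μ * (a^2 + b^2))) *
          ((∑' n : ℕ, kseq k0 μ (n+2) * ‖u (n+2)‖^2) * qSq k0 μ v)
        ≤ (4 * (μ * (a^2 + b^2))) * (qSq k0 μ u * qSq k0 μ v) := by
      apply mul_le_mul_of_nonneg_left _ (by positivity)
      exact mul_le_mul_of_nonneg_right hS1 hQv0
    have hQQ : 0 ≤ qSq k0 μ u * qSq k0 μ v := mul_nonneg hQu0 hQv0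
    nlinarith [h1, h3, mul_nonneg hμ0.le hQQ]
  calc Real.sqrt (hSq (goyB k0 μ a b u v))
      ≤ Real.sqrt ((16 * μ * (a^2 + b^2 + 1)) * (qSq k0 μ u * qSq k0 μ v)) :=
        Real.sqrt_le_sqrt htsum
    _ = Real.sqrt (16 * μ * (a^2 + b^2 + 1)) * (Real.sqrt (qSq k0 μ u) * Real.sqrt (qSq k0 μ v)) := by
        rw [Real.sqrt_mul hCsq_pos.le, Real.sqrt_mul hQu0]
    _ = Real.sqrt (16 * μ * (a^2 + b^2 + 1)) * Real.sqrt (qSq k0 μ u) * Real.sqrt (qSq k0 μ v) := by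
        ring
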